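/- Let N be a positive integer and m a nonzero integer. Let R = ℤ[T,T⁻¹] be the ring of Laurent polynomials over ℤ, let A be the 4×4 matrix over R whose diagonal entries all equal T^N − 1, whose entry in row 1 and column 4 equals −mT, and whose other entries are zero, let M be the cokernel of the R-linear map R⁴ → R⁴ given by multiplication by A, and for i ∈ ℤ let σ_i ∈ M denote the class of the vector (0,0,0,i). If i is a nonzero integer, then for every nonzero integer k one has (T^k − 1)·σ_i ≠ 0 in M (where T^k denotes the Laurent monomial of degree k, which may be negative). -/

import Mathlib

/-!
Suppose `(T^k - 1) • σ_i = 0`, i.e. `(T^k - 1)(0,0,0,i) = A v` for some `v`. Evaluate at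
`T = 1 + ε` in the dual numbers `ℤ[ε]`: the `ε`-free part of a Laurent polynomial is its value at
`T = 1` and the `ε`-part its derivative there. The first row `(T^N - 1) v₀ = m T v₃` then gives
`m · v₃(1) = 0`, so `v₃(1) = 0`, and the `ε`-part of the last row `(T^k - 1) i = (T^N - 1) v₃`
gives `k · i = N · v₃(1) = 0`.
-/

open LaurentPolynomial

noncomputable section

/-- The 4×4 matrix over ℤ[T,T⁻¹] with diagonal entries `T^N - 1`, entry `-m·T`
in row 1, column 4 (zero-indexed: row 0, column 3), and all other entries zero. -/
def Amat (N : ℕ) (m : ℤ) : Matrix (Fin 4) (Fin 4) (LaurentPolynomial ℤ) :=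
  fun i j =>
    if i = j then T (N : ℤ) - 1
    else if i = 0 ∧ j = 3 then -(m : LaurentPolynomial ℤ) * T 1
    else 0

/-- The cokernel of the map `R⁴ → R⁴` given by multiplication by `Amat N m`. -/
def Coker (N : ℕ) (m : ℤ) :=
  (Fin 4 → LaurentPolynomial ℤ) ⧸ LinearMap.range (Amat N m).mulVecLin

instance (N : ℕ) (m : ℤ) : AddCommGroup (Coker N m) :=
  Submodule.Quotient.addCommGroup _

instance (N : ℕ) (m : ℤ) : Module (LaurentPolynomial ℤ) (Coker N m) :=
  Submodule.Quotient.module _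

/-- `σ_i`: the class of the vector `(0,0,0,i)` in the cokernel. -/
def sigma (N : ℕ) (m : ℤ) (i : ℤ) : Coker N m :=
  Submodule.Quotient.mk ![0, 0, 0, (i : LaurentPolynomial ℤ)]

open DualNumber TrivSqZeroExt

namespace DualNumber

variable {R : Type*} [CommRing R]

def oneAddEpsUnit : R[ε]ˣ where
  val := 1 + ε
  inv := 1 - (ε : R[ε])
  val_inv := by linear_combination (-1 : R[ε]) * (eps_mul_eps (R := R))
  inv_val := by linear_combination (-1 : R[ε]) * (eps_mul_eps (R := R))

theorem val_oneAddEpsUnit : ((oneAddEpsUnit : R[ε]ˣ) : R[ε]) = 1 + ε := rfl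

theorem val_inv_oneAddEpsUnit : ((oneAddEpsUnit⁻¹ : R[ε]ˣ) : R[ε]) = 1 - ε := rfl

theorem oneAddEpsUnit_zpow (n : ℤ) :
    ((oneAddEpsUnit ^ n : R[ε]ˣ) : R[ε]) = 1 + n * (ε : R[ε]) := by
  induction n using Int.induction_on with
  | zero => simp
  | succ n ih =>
    rw [zpow_add_one, Units.val_mul, ih, val_oneAddEpsUnit]
    push_cast
    linear_combination (n : R[ε]) * (eps_mul_eps (R := R))
  | pred n ih =>
    rw [zpow_sub_one, Units.val_mul, ih, val_inv_oneAddEpsUnit]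
    push_cast
    linear_combination (n : R[ε]) * (eps_mul_eps (R := R))

end DualNumber

namespace LaurentPolynomial

variable {R : Type*} [CommRing R]

def evalOneAddEps : R[T;T⁻¹] →+* R[ε] := eval₂ (algebraMap R R[ε]) oneAddEpsUnit

theorem evalOneAddEps_T (n : ℤ) : evalOneAddEps (T n : R[T;T⁻¹]) = 1 + n * (ε : R[ε]) := by
  simp [evalOneAddEps, oneAddEpsUnit_zpow]

theorem evalOneAddEps_T_sub_one (n : ℤ) :
    evalOneAddEps (T n - 1 : R[T;T⁻¹]) = n * (ε : R[ε]) := by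
  rw [map_sub, evalOneAddEps_T, map_one, add_sub_cancel_left]

end LaurentPolynomial

section Cokernel

open Matrix

theorem smul_sigma_eq_zero_iff {N : ℕ} {m : ℤ} (p : LaurentPolynomial ℤ) (i : ℤ) :
    p • sigma N m i = 0 ↔
      ∃ v, Amat N m *ᵥ v = p • ![0, 0, 0, (i : LaurentPolynomial ℤ)] := by
  change (p • (Submodule.Quotient.mk _ : (Fin 4 → LaurentPolynomial ℤ) ⧸
    LinearMap.range (Amat N m).mulVecLin)) = 0 ↔ _
  rw [← Submodule.Quotient.mk_smul, Submodule.Quotient.mk_eq_zero]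
  rfl

theorem Amat_mulVec_zero (N : ℕ) (m : ℤ) (v : Fin 4 → LaurentPolynomial ℤ) :
    (Amat N m *ᵥ v) 0 = (T N - 1) * v 0 - (m : LaurentPolynomial ℤ) * T 1 * v 3 := by
  simp [mulVec, dotProduct, Fin.sum_univ_four, Amat, sub_eq_add_neg]

theorem Amat_mulVec_three (N : ℕ) (m : ℤ) (v : Fin 4 → LaurentPolynomial ℤ) :
    (Amat N m *ᵥ v) 3 = (T N - 1) * v 3 := by
  simp [mulVec, dotProduct, Amat]

theorem mul_eq_zero_of_Amat_mulVec_eq {N : ℕ} {m : ℤ} (hm : m ≠ 0) {k i : ℤ}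
    {v : Fin 4 → LaurentPolynomial ℤ}
    (hv : Amat N m *ᵥ v =
      (T k - 1 : LaurentPolynomial ℤ) • ![0, 0, 0, (i : LaurentPolynomial ℤ)]) :
    k * i = 0 := by
  have value_at_one : fst (evalOneAddEps (v 3)) = 0 := by
    simpa [Amat_mulVec_zero, evalOneAddEps_T_sub_one, evalOneAddEps_T, hm] using
      congrArg (fst ∘ evalOneAddEps) (congrFun hv 0)
  have derivative_at_one : (N : ℤ) * fst (evalOneAddEps (v 3)) = k * i := by
    simpa [Amat_mulVec_three, evalOneAddEps_T_sub_one] using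
      congrArg (snd ∘ evalOneAddEps) (congrFun hv 3)
  rw [← derivative_at_one, value_at_one, mul_zero]

end Cokernel

theorem stmt3_general (N : ℕ) (m : ℤ) (hm : m ≠ 0) (i : ℤ) (hi : i ≠ 0) :
    ∀ k : ℤ, k ≠ 0 → ((T k - 1 : LaurentPolynomial ℤ)) • sigma N m i ≠ 0 := by
  intro k hk h
  obtain ⟨v, hv⟩ := (smul_sigma_eq_zero_iff _ i).mp h
  exact mul_ne_zero hk hi (mul_eq_zero_of_Amat_mulVec_eq hm hv)

theorem stmt3 (N : ℕ) (hN : 0 < N) (m : ℤ) (hm : m ≠ 0) (i : ℤ) (hi : i ≠ 0) :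
    ∀ k : ℤ, k ≠ 0 → ((T k - 1 : LaurentPolynomial ℤ)) • sigma N m i ≠ 0 :=
  stmt3_general N m hm i hi
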